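/- arXiv:0808.1129 — 3 statements merged into one kernel-verified Lean document; each statement's English description precedes it below -/
import Mathlib

section
/- Let p be an odd prime, V a vector space over 𝔽_p, W a one-dimensional 𝔽_p-vector space, and [·,·] : V × V → W an alternating bilinear form (bilinear with [x,x] = 0 for all x ∈ V). Then for all a, b, c, d in V with [a,b] = [c,d], there exist x and y in V such that [a,b] = [x,b], [x,b] = [x,y], [x,y] = [c,y], and [c,y] = [c,d]. -/
/-!
Put `w = [a,b]`; for `w = 0` take `x = y = 0`. Otherwise, after identifying `W` with `𝔽_p`,
it suffices to find `x` with `[x,b] = w` such that `[c,·]` does not vanish on the kernel of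
`[x - c,·]`: a suitable multiple `y` of a vector of that kernel then has `[x,y] = [c,y] = w`.
One of `x = a` and `x = a + b` works. If neither does, `[c,·]` is a multiple of both
`[a - c,·]` and `[a + b - c,·]`; evaluating at `a` and using `[a,a] = 0` forces
`[a,·] = 0` or `[c,·] = 0`, contradicting `[a,b] = w = [c,d]`.
-/

open LinearMap

section Functionals

variable {K V : Type*} [Field K] [AddCommGroup V] [Module K V]

theorem LinearMap.exists_eq_smul_of_ker_le_ker {f g : V →ₗ[K] K} (h : ker f ≤ ker g) :
    ∃ κ : K, g = κ • f := by
  by_cases hf : f = 0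
  · refine ⟨0, ext fun v => ?_⟩
    simpa [hf] using h (show v ∈ ker f by simp [hf])
  · obtain ⟨u, hu⟩ : ∃ u, f u ≠ 0 := by
      by_contra! hu
      exact hf (ext hu)
    refine ⟨g u / f u, ext fun v => ?_⟩
    have hker : v - (f v / f u) • u ∈ ker f := by
      simp [mem_ker, div_mul_cancel₀ _ hu]
    have := h hker
    rw [mem_ker, map_sub, map_smul, smul_eq_mul, sub_eq_zero] at this
    rw [this, smul_apply, smul_eq_mul]
    ring

theorem LinearMap.exists_mem_ker_apply_eq_of_not_ker_le {f g : V →ₗ[K] K}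
    (h : ¬ ker f ≤ ker g) (w : K) : ∃ y, f y = 0 ∧ g y = w := by
  obtain ⟨y, hfy, hgy⟩ := SetLike.not_le_iff_exists.mp h
  rw [mem_ker] at hfy hgy
  exact ⟨(w / g y) • y, by simp [hfy], by simp [div_mul_cancel₀ _ hgy]⟩

end Functionals

namespace LinearMap.IsAlt

variable {K V : Type*} [Field K] [AddCommGroup V] [Module K V]
  {B : V →ₗ[K] V →ₗ[K] K}

theorem exists_not_ker_sub_le_ker (hB : B.IsAlt) {a b c : V} (hab : B a b ≠ 0) (hc : B c ≠ 0) :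
    ∃ x, B x b = B a b ∧ ¬ ker (B (x - c)) ≤ ker (B c) := by
  by_contra! hker
  obtain ⟨κ, hκ⟩ := exists_eq_smul_of_ker_le_ker (hker a rfl)
  obtain ⟨κ', hκ'⟩ := exists_eq_smul_of_ker_le_ker (hker (a + b) (by simp [hB.self_eq_zero]))
  have hκa := congr($hκ a)
  have hκ'a := congr($hκ' a)
  simp only [smul_apply, map_sub, map_add, sub_apply, add_apply, hB.self_eq_zero, smul_eq_mul]
    at hκa hκ'a
  have hca : B c a = 0 := by
    by_contra hca
    have hκ_neg_one : κ = -1 := by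
      apply mul_right_cancel₀ hca
      linear_combination hκa
    apply hab
    have hbc := congr($hκ b)
    simp only [hκ_neg_one, smul_apply, sub_apply, map_sub, smul_eq_mul] at hbc
    linear_combination hbc
  have hκ'0 : κ' = 0 := by
    rw [hca, ← hB.neg a b] at hκ'a
    have : κ' * B a b = 0 := by linear_combination hκ'a
    exact (mul_eq_zero.mp this).resolve_right hab
  exact hc (by rw [hκ', hκ'0, zero_smul])

theorem exists_chain (hB : B.IsAlt) {a b c d : V} (h : B a b = B c d) :
    ∃ x y : V, B a b = B x b ∧ B x b = B x y ∧ B x y = B c y ∧ B c y = B c d := by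
  by_cases hw : B a b = 0
  · exact ⟨0, 0, by simp [hw], by simp, by simp, by simp [← h, hw]⟩
  have hc : B c ≠ 0 := fun hc => hw (by rw [h, hc, zero_apply])
  obtain ⟨x, hxb, hx⟩ := hB.exists_not_ker_sub_le_ker hw hc
  obtain ⟨y, hxy, hcy⟩ := exists_mem_ker_apply_eq_of_not_ker_le hx (B a b)
  rw [map_sub, sub_apply, sub_eq_zero] at hxy
  exact ⟨x, y, hxb.symm, by rw [hxb, hxy, hcy], by rw [hxy], by rw [hcy, h]⟩

end LinearMap.IsAlt

theorem LinearMap.IsAlt.exists_chain_of_finrank_eq_one {K V W : Type*} [Field K]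
    [AddCommGroup V] [Module K V] [AddCommGroup W] [Module K W] (hW : Module.finrank K W = 1)
    {B : V →ₗ[K] V →ₗ[K] W} (hB : B.IsAlt) {a b c d : V} (h : B a b = B c d) :
    ∃ x y : V, B a b = B x b ∧ B x b = B x y ∧ B x y = B c y ∧ B c y = B c d := by
  let e : W ≃ₗ[K] K :=
    (Module.basisUnique Unit hW).equivFun ≪≫ₗ LinearEquiv.funUnique Unit K K
  have hB' : (B.compr₂ e.toLinearMap).IsAlt := fun x => by simp [hB.self_eq_zero]
  simpa [e.injective.eq_iff] using hB'.exists_chain (congrArg e h)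

theorem stmt_1_general (p : ℕ) (hp : p.Prime)
    (V : Type*) [AddCommGroup V] [Module (ZMod p) V]
    (W : Type*) [AddCommGroup W] [Module (ZMod p) W]
    (hW : Module.finrank (ZMod p) W = 1)
    (B : V →ₗ[ZMod p] V →ₗ[ZMod p] W) (hB : ∀ x : V, B x x = 0)
    (a b c d : V) (h : B a b = B c d) :
    ∃ x y : V, B a b = B x b ∧ B x b = B x y ∧ B x y = B c y ∧ B c y = B c d := by
  have := Fact.mk hp
  exact LinearMap.IsAlt.exists_chain_of_finrank_eq_one hW hB h

/-- Condition (i) of the Claim in the proof of Lemma 6.6 (Tate's Prop. 4.5): for an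
alternating bilinear form `B : V × V → W` on an `𝔽_p`-vector space `V` (p odd) with
one-dimensional target `W`, any two equal values `B a b = B c d` can be connected by a
chain `B a b = B x b = B x y = B c y = B c d`. -/
theorem stmt_1 (p : ℕ) (hp : p.Prime) (hodd : Odd p)
    (V : Type*) [AddCommGroup V] [Module (ZMod p) V]
    (W : Type*) [AddCommGroup W] [Module (ZMod p) W]
    (hW : Module.finrank (ZMod p) W = 1)
    (B : V →ₗ[ZMod p] V →ₗ[ZMod p] W) (hB : ∀ x : V, B x x = 0)
    (a b c d : V) (h : B a b = B c d) :
    ∃ x y : V, B a b = B x b ∧ B x b = B x y ∧ B x y = B c y ∧ B c y = B c d :=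
  stmt_1_general p hp V W hW B hB a b c d h
end

section
/- Let p be an odd prime, V a vector space over 𝔽_p, W a one-dimensional 𝔽_p-vector space, and [·,·] : V × V → W an alternating bilinear form (bilinear with [x,x] = 0 for all x ∈ V). Then for all a₁, a₂, b₁, b₂ in V, there exist c₁, c₂ and d in V such that [a₁,b₁] = [c₁,d] and [a₂,b₂] = [c₂,d]. -/
theorem LinearMap.exists_common_right_of_finrank_eq_one {K M N W : Type*} [Field K]
    [AddCommGroup M] [Module K M] [AddCommGroup N] [Module K N] [AddCommGroup W] [Module K W]
    (hW : Module.finrank K W = 1) (B : M →ₗ[K] N →ₗ[K] W) (a₁ a₂ : M) (b₁ b₂ : N) :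
    ∃ (c₁ c₂ : M) (d : N), B a₁ b₁ = B c₁ d ∧ B a₂ b₂ = B c₂ d := by
  by_cases h₁ : B a₁ b₁ = 0
  · exact ⟨0, a₂, b₂, by simp [h₁], rfl⟩
  · obtain ⟨k, hk⟩ := (finrank_eq_one_iff_of_nonzero' _ h₁).mp hW (B a₂ b₂)
    exact ⟨a₁, k • a₁, b₁, rfl, by simp [← hk]⟩

theorem stmt_2_general (p : ℕ) (hp : p.Prime)
    (V : Type*) [AddCommGroup V] [Module (ZMod p) V]
    (W : Type*) [AddCommGroup W] [Module (ZMod p) W]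
    (hW : Module.finrank (ZMod p) W = 1)
    (B : V →ₗ[ZMod p] V →ₗ[ZMod p] W)
    (a₁ a₂ b₁ b₂ : V) :
    ∃ c₁ c₂ d : V, B a₁ b₁ = B c₁ d ∧ B a₂ b₂ = B c₂ d :=
  haveI : Fact p.Prime := ⟨hp⟩
  B.exists_common_right_of_finrank_eq_one hW a₁ a₂ b₁ b₂

/-- Condition (ii) of the Claim in the proof of Lemma 6.6 (Tate's Prop. 4.5): for an
alternating bilinear form `B : V × V → W` on an `𝔽_p`-vector space `V` (p odd) with
one-dimensional target `W`, any two values `B a₁ b₁`, `B a₂ b₂` can be written as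
`B c₁ d`, `B c₂ d` with a common `d`. -/
theorem stmt_2 (p : ℕ) (hp : p.Prime) (hodd : Odd p)
    (V : Type*) [AddCommGroup V] [Module (ZMod p) V]
    (W : Type*) [AddCommGroup W] [Module (ZMod p) W]
    (hW : Module.finrank (ZMod p) W = 1)
    (B : V →ₗ[ZMod p] V →ₗ[ZMod p] W) (hB : ∀ x : V, B x x = 0)
    (a₁ a₂ b₁ b₂ : V) :
    ∃ c₁ c₂ d : V, B a₁ b₁ = B c₁ d ∧ B a₂ b₂ = B c₂ d :=
  stmt_2_general p hp V W hW B a₁ a₂ b₁ b₂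
end

section
/- Let p be a prime and let C be a nontrivial subgroup of the multiplicative group (ℤ/pℤ)ˣ. Let H be the subgroup of GL₂(𝔽_p) consisting of all diagonal matrices diag(a, 1) with a ∈ C, let D be the subgroup of all invertible diagonal matrices in GL₂(𝔽_p), and let w be the Weyl element given by the matrix with rows (0, −1) and (1, 0). Then every element of GL₂(𝔽_p) that normalizes H is contained in the subgroup of GL₂(𝔽_p) generated by D and w. -/
/-!
Pick `a ∈ C` with `a ≠ 1`. If `g` normalizes `H`, then `g · diag(a,1) · g⁻¹ = diag(b,1)` for some
`b`, i.e. `diag(b,1) · g = g · diag(a,1)`. Comparing entries, the `(1,0)` entry of `g` is fixed by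
multiplication by `a ≠ 1`, so it vanishes. Then `det g ≠ 0` forces `g₀₀ ≠ 0`, and `b g₀₀ = g₀₀ a`
gives `b = a ≠ 1`, so the `(0,1)` entry, which is fixed by multiplication by `b`, vanishes too.
Hence the normalizer already lies in the diagonal torus.
-/

open Matrix

theorem Matrix.isDiag_of_diagonal_mul_eq_mul_diagonal {R : Type*} [CommRing R] [NoZeroDivisors R]
    {a b : R} (ha : a ≠ 1) {A : Matrix (Fin 2) (Fin 2) R} (hA : A.det ≠ 0)
    (h : diagonal ![b, 1] * A = A * diagonal ![a, 1]) : A.IsDiag := by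
  have entry (i j : Fin 2) := congrFun (congrFun h i) j
  simp only [mul_diagonal, diagonal_mul] at entry
  have e00 : b * A 0 0 = A 0 0 * a := by simpa using entry 0 0
  have e01 : b * A 0 1 = A 0 1 := by simpa using entry 0 1
  have e10 : A 1 0 = A 1 0 * a := by simpa using entry 1 0
  have h10 : A 1 0 = 0 := by
    have : A 1 0 * (a - 1) = 0 := by linear_combination -e10
    exact (mul_eq_zero.mp this).resolve_right (sub_ne_zero.mpr ha)
  have h00 : A 0 0 ≠ 0 := by
    intro h0
    simp [det_fin_two, h0, h10] at hA
  have h01 : A 0 1 = 0 := by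
    by_contra h01
    have hb : b = 1 := by
      have : (b - 1) * A 0 1 = 0 := by linear_combination e01
      exact sub_eq_zero.mp ((mul_eq_zero.mp this).resolve_right h01)
    have : A 0 0 * (a - 1) = 0 := by linear_combination -e00 + A 0 0 * hb
    exact ha (sub_eq_zero.mp ((mul_eq_zero.mp this).resolve_left h00))
  intro i j hij
  fin_cases i <;> fin_cases j
  exacts [absurd rfl hij, h01, h10, absurd rfl hij]

theorem stmt_3_general (p : ℕ) (hp : p.Prime)
    (C : Subgroup (ZMod p)ˣ) (hC : C ≠ ⊥)
    (H : Subgroup (Matrix.GeneralLinearGroup (Fin 2) (ZMod p)))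
    (hH : ∀ M : Matrix.GeneralLinearGroup (Fin 2) (ZMod p),
      M ∈ H ↔ ∃ a ∈ C, (M : Matrix (Fin 2) (Fin 2) (ZMod p)) =
        Matrix.diagonal ![(a : ZMod p), 1])
    (D : Subgroup (Matrix.GeneralLinearGroup (Fin 2) (ZMod p)))
    (hD : ∀ M : Matrix.GeneralLinearGroup (Fin 2) (ZMod p),
      M ∈ D ↔ (M : Matrix (Fin 2) (Fin 2) (ZMod p)).IsDiag)
    (w : Matrix.GeneralLinearGroup (Fin 2) (ZMod p))
    (g : Matrix.GeneralLinearGroup (Fin 2) (ZMod p))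
    (hg : g ∈ Subgroup.normalizer (H : Set (Matrix.GeneralLinearGroup (Fin 2) (ZMod p)))) :
    g ∈ D ⊔ Subgroup.closure {w} := by
  have : Fact p.Prime := ⟨hp⟩
  obtain ⟨⟨a, haC⟩, ha⟩ := Subgroup.ne_bot_iff_exists_ne_one.mp hC
  replace ha : (a : ZMod p) ≠ 1 := fun h ↦ ha (Subtype.ext (Units.ext h))
  obtain ⟨M, hMval⟩ : IsUnit (diagonal ![(a : ZMod p), 1]) :=
    isUnit_diagonal.mpr (Pi.isUnit_iff.mpr fun i ↦ by fin_cases i <;> simp)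
  have hM : M ∈ H := (hH M).mpr ⟨a, haC, hMval⟩
  obtain ⟨b, -, hb⟩ := (hH _).mp ((Subgroup.mem_normalizer_iff.mp hg _).mp hM)
  have hconj : diagonal ![(b : ZMod p), 1] * (g : Matrix (Fin 2) (Fin 2) (ZMod p)) =
      g * diagonal ![(a : ZMod p), 1] := by
    rw [← hb, ← hMval, ← Units.val_mul, ← Units.val_mul, inv_mul_cancel_right]
  refine Subgroup.mem_sup_left ((hD g).mpr ?_)
  exact isDiag_of_diagonal_mul_eq_mul_diagonal ha (g.isUnit.map detMonoidHom).ne_zero hconj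

/-- The 'explicit calculation' in the proof of Lemma 4.0: for a nontrivial subgroup
`C ≤ 𝔽_pˣ`, the normalizer in `GL₂(𝔽_p)` of `H = { diag(a,1) : a ∈ C }` is contained in
the subgroup generated by the diagonal torus `D` and the Weyl element `w = [[0,-1],[1,0]]`. -/
theorem stmt_3 (p : ℕ) (hp : p.Prime)
    (C : Subgroup (ZMod p)ˣ) (hC : C ≠ ⊥)
    (H : Subgroup (Matrix.GeneralLinearGroup (Fin 2) (ZMod p)))
    (hH : ∀ M : Matrix.GeneralLinearGroup (Fin 2) (ZMod p),
      M ∈ H ↔ ∃ a ∈ C, (M : Matrix (Fin 2) (Fin 2) (ZMod p)) =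
        Matrix.diagonal ![(a : ZMod p), 1])
    (D : Subgroup (Matrix.GeneralLinearGroup (Fin 2) (ZMod p)))
    (hD : ∀ M : Matrix.GeneralLinearGroup (Fin 2) (ZMod p),
      M ∈ D ↔ (M : Matrix (Fin 2) (Fin 2) (ZMod p)).IsDiag)
    (w : Matrix.GeneralLinearGroup (Fin 2) (ZMod p))
    (hw : (w : Matrix (Fin 2) (Fin 2) (ZMod p)) = !![0, -1; 1, 0])
    (g : Matrix.GeneralLinearGroup (Fin 2) (ZMod p))
    (hg : g ∈ Subgroup.normalizer (H : Set (Matrix.GeneralLinearGroup (Fin 2) (ZMod p)))) :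
    g ∈ D ⊔ Subgroup.closure {w} :=
  stmt_3_general p hp C hC H hH D hD w g hg
end
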